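/- Let X and Y be independent exponential random variables with means λ_sr > 0 and λ_rd > 0 respectively, and let P_Sm, P_Rm, θ, ζ, N_0 > 0 satisfy P_Rm/(θ·P_Sm) < N_0·ζ/P_Sm. Then P( P_Sm·X/N_0 ≥ ζ and min(θ·P_Sm·X, P_Rm)·Y/N_0 ≥ ζ ) = exp( −( N_0·ζ/(P_Sm·λ_sr) + N_0·ζ/(P_Rm·λ_rd) ) ). -/

import Mathlib

/-!
On the event `PSm * X / N0 ≥ ζ`, i.e. `X ≥ N0 * ζ / PSm`, the case assumption gives
`θ * PSm * X > PRm`, so the relay transmits at its cap `PRm` and the second condition reads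
`Y ≥ N0 * ζ / PRm`. The event is thus a product of two exponential tails, and independence
multiplies them.
-/

open MeasureTheory ProbabilityTheory Set Real

namespace ProbabilityTheory

instance (r : ℝ) : NullSingletonClass (expMeasure r) where
  measure_singleton a := withDensity_absolutelyContinuous _ _ (measure_singleton a)

lemma expMeasure_Ioi {r a : ℝ} (hr : 0 < r) (ha : 0 ≤ a) :
    expMeasure r (Ioi a) = ENNReal.ofReal (exp (-(r * a))) := by
  have := isProbabilityMeasure_expMeasure hr
  have hexp : exp (-(r * a)) ≤ 1 := exp_le_one_iff.mpr (by nlinarith)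
  rw [← compl_Iic, prob_compl_eq_one_sub measurableSet_Iic, ← ofReal_cdf, cdf_expMeasure_eq hr,
    if_pos ha, ← ENNReal.ofReal_one, ← ENNReal.ofReal_sub _ (sub_nonneg.mpr hexp), sub_sub_cancel]

lemma expMeasure_Ici {r a : ℝ} (hr : 0 < r) (ha : 0 ≤ a) :
    expMeasure r (Ici a) = ENNReal.ofReal (exp (-(r * a))) := by
  rw [← measure_congr Ioi_ae_eq_Ici, expMeasure_Ioi hr ha]

lemma IndepFun.measure_preimage_Ici_inter_of_map_eq_expMeasure {Ω : Type*} [MeasurableSpace Ω]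
    {μ : Measure Ω} {X Y : Ω → ℝ} (hXm : Measurable X) (hYm : Measurable Y) (hind : IndepFun X Y μ)
    {r s a b : ℝ} (hr : 0 < r) (hs : 0 < s) (ha : 0 ≤ a) (hb : 0 ≤ b)
    (hX : μ.map X = expMeasure r) (hY : μ.map Y = expMeasure s) :
    μ (X ⁻¹' Ici a ∩ Y ⁻¹' Ici b) = ENNReal.ofReal (exp (-(r * a + s * b))) := by
  rw [hind.measure_inter_preimage_eq_mul _ _ measurableSet_Ici measurableSet_Ici,
    ← Measure.map_apply hXm measurableSet_Ici, ← Measure.map_apply hYm measurableSet_Ici, hX, hY,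
    expMeasure_Ici hr ha, expMeasure_Ici hs hb, ← ENNReal.ofReal_mul (exp_pos _).le, ← exp_add,
    neg_add]

end ProbabilityTheory

lemma le_mul_div_iff_div_le {ζ P N x : ℝ} (hP : 0 < P) (hN : 0 < N) :
    ζ ≤ P * x / N ↔ N * ζ / P ≤ x := by
  rw [le_div_iff₀ hN, div_le_iff₀ hP, mul_comm ζ, mul_comm P]

lemma min_eq_cap_of_threshold_le {PSm PRm θ ζ N0 x : ℝ} (hPSm : 0 < PSm) (hθ : 0 < θ)
    (hcase : PRm / (θ * PSm) < N0 * ζ / PSm) (hx : N0 * ζ / PSm ≤ x) :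
    min (θ * PSm * x) PRm = PRm := by
  have hlt : PRm < x * (θ * PSm) := (div_lt_iff₀ (by positivity)).mp (hcase.trans_le hx)
  exact min_eq_right (by linarith)

lemma snr_thresholds_iff {PSm PRm θ ζ N0 x y : ℝ} (hPSm : 0 < PSm) (hPRm : 0 < PRm) (hθ : 0 < θ)
    (hN0 : 0 < N0) (hcase : PRm / (θ * PSm) < N0 * ζ / PSm) :
    (PSm * x / N0 ≥ ζ ∧ min (θ * PSm * x) PRm * y / N0 ≥ ζ) ↔
      (N0 * ζ / PSm ≤ x ∧ N0 * ζ / PRm ≤ y) := by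
  simp only [ge_iff_le, le_mul_div_iff_div_le hPSm hN0]
  refine and_congr_right fun hx ↦ ?_
  rw [min_eq_cap_of_threshold_le hPSm hθ hcase hx, le_mul_div_iff_div_le hPRm hN0]

theorem noise_dominant_case_II
    {Ω : Type*} [MeasureSpace Ω] [IsProbabilityMeasure (ℙ : Measure Ω)]
    (X Y : Ω → ℝ) (hXm : Measurable X) (hYm : Measurable Y)
    (lsr lrd : ℝ) (hlsr : 0 < lsr) (hlrd : 0 < lrd)
    (hX : Measure.map X ℙ = expMeasure lsr⁻¹)
    (hY : Measure.map Y ℙ = expMeasure lrd⁻¹)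
    (hind : IndepFun X Y ℙ)
    (PSm PRm θ ζ N0 : ℝ)
    (hPSm : 0 < PSm) (hPRm : 0 < PRm) (hθ : 0 < θ) (hζ : 0 < ζ) (hN0 : 0 < N0)
    (hcase : PRm / (θ * PSm) < N0 * ζ / PSm) :
    ℙ {ω | PSm * X ω / N0 ≥ ζ ∧ min (θ * PSm * X ω) PRm * Y ω / N0 ≥ ζ} =
      ENNReal.ofReal
        (Real.exp (-(N0 * ζ / (PSm * lsr) + N0 * ζ / (PRm * lrd)))) := by
  have hevent : {ω | PSm * X ω / N0 ≥ ζ ∧ min (θ * PSm * X ω) PRm * Y ω / N0 ≥ ζ} =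
      X ⁻¹' Ici (N0 * ζ / PSm) ∩ Y ⁻¹' Ici (N0 * ζ / PRm) :=
    ext fun ω ↦ snr_thresholds_iff hPSm hPRm hθ hN0 hcase
  rw [hevent, hind.measure_preimage_Ici_inter_of_map_eq_expMeasure hXm hYm (inv_pos.mpr hlsr)
    (inv_pos.mpr hlrd) (by positivity) (by positivity) hX hY]
  congr 3
  field_simp
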